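/- arXiv:1606.05050 — 9 statements merged into one kernel-verified Lean document; each statement's English description precedes it below -/
import Mathlib

section
/- Let F be a field with characteristic greater than n (or zero), and let β ∈ F with β ∉ {0,1,...,n}. If f ∈ F[x_1,...,x_n] is a multilinear polynomial such that f(x)·(x_1+⋯+x_n−β) ≡ 1 modulo the ideal generated by {x_i²−x_i}, then deg f = n. -/
/-!
On a vertex `1_S` of the Boolean cube the hypothesis forces `f(1_S) = 1/(|S| - β)`. For a
multilinear `f` the coefficient of `x₁⋯xₙ` is recovered by inclusion–exclusion over the
cube, `∑_S (-1)^{n-|S|} f(1_S)`, which here is the `n`-th forward difference of `t ↦ 1/(t - β)`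
at `0`, namely `(-1)^n n! / ∏_{k=0}^{n} (k - β)`. This is nonzero because `n! ≠ 0` in `F`
and `β ∉ {0, …, n}`, so `f` contains the monomial `x₁⋯xₙ` and has degree `n`.
-/

open MvPolynomial Finset
open scoped fwdDiff Nat

section

variable {σ R : Type*} [CommRing R]

lemma eval_eq_zero_of_mem_span_X_sq_sub_X {x : σ → R} (hx : ∀ i, x i ^ 2 = x i)
    {g : MvPolynomial σ R} (hg : g ∈ Ideal.span (Set.range fun i => X i ^ 2 - X i)) :
    eval x g = 0 := by
  refine (Ideal.span_le (I := RingHom.ker (eval x))).2 ?_ hg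
  rintro _ ⟨i, rfl⟩
  simp [RingHom.mem_ker, hx]

def cubeVertex [DecidableEq σ] (S : Finset σ) : σ → R := fun i => if i ∈ S then 1 else 0

lemma cubeVertex_sq [DecidableEq σ] (S : Finset σ) (i : σ) :
    cubeVertex (R := R) S i ^ 2 = cubeVertex S i := by
  unfold cubeVertex; split_ifs <;> simp

lemma eval_cubeVertex_sum_X [Fintype σ] [DecidableEq σ] (S : Finset σ) :
    eval (cubeVertex S) (∑ i, X i : MvPolynomial σ R) = #S := by
  simp [cubeVertex]

lemma eval_cubeVertex_monomial [DecidableEq σ] (S : Finset σ) (d : σ →₀ ℕ) (a : R) :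
    eval (cubeVertex S) (monomial d a) = if d.support ⊆ S then a else 0 := by
  rw [eval_monomial]
  split_ifs with h
  · rw [Finsupp.prod, prod_eq_one fun i hi => by simp [cubeVertex, h hi], mul_one]
  · obtain ⟨i, hi, hiS⟩ := not_subset.1 h
    rw [Finsupp.prod, prod_eq_zero hi (by simp [cubeVertex, hiS, Finsupp.mem_support_iff.1 hi]),
      mul_zero]

lemma sum_neg_one_pow_card_compl_filter_subset [Fintype σ] [DecidableEq σ] (A : Finset σ) :
    ∑ S with A ⊆ S, (-1 : R) ^ #Sᶜ = if A = univ then 1 else 0 := by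
  have h := congrArg (Int.cast : ℤ → R) (sum_powerset_neg_one_pow_card (x := Aᶜ))
  push_cast at h
  simp only [compl_eq_empty_iff] at h
  rw [← h]
  refine sum_nbij' (·ᶜ) (·ᶜ) ?_ ?_ ?_ ?_ ?_ <;> simp [subset_compl_comm]

lemma sum_neg_one_pow_mul_eval_cubeVertex [Fintype σ] [DecidableEq σ] (f : MvPolynomial σ R) :
    ∑ S, (-1) ^ #Sᶜ * eval (cubeVertex S) f =
      ∑ d ∈ f.support with d.support = univ, coeff d f := by
  conv_lhs => rw [f.as_sum]
  simp_rw [map_sum, eval_cubeVertex_monomial, mul_sum]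
  rw [sum_comm, sum_filter]
  refine sum_congr rfl fun d _ => ?_
  simp_rw [mul_ite, mul_zero, ← sum_filter, ← sum_mul, sum_neg_one_pow_card_compl_filter_subset,
    ite_mul, one_mul, zero_mul]

lemma support_eq_univ_iff_eq_one [Fintype σ] {d : σ →₀ ℕ} (hd : ∀ i, d i ≤ 1) :
    d.support = univ ↔ d = Finsupp.equivFunOnFinite.symm 1 := by
  simp only [eq_univ_iff_forall, Finsupp.mem_support_iff, Finsupp.ext_iff,
    Finsupp.coe_equivFunOnFinite_symm, Pi.one_apply]
  exact forall_congr' fun i => by have := hd i; omega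

lemma coeff_one_eq_sum_neg_one_pow_mul_eval_cubeVertex [Fintype σ] [DecidableEq σ]
    {f : MvPolynomial σ R} (hf : ∀ i, degreeOf i f ≤ 1) :
    coeff (Finsupp.equivFunOnFinite.symm 1) f =
      ∑ S, (-1) ^ #Sᶜ * eval (cubeVertex S) f := by
  rw [sum_neg_one_pow_mul_eval_cubeVertex, sum_filter]
  have hsupp : ∀ d ∈ f.support, d.support = univ ↔ d = Finsupp.equivFunOnFinite.symm 1 :=
    fun d hd => support_eq_univ_iff_eq_one fun i => degreeOf_le_iff.1 (hf i) d hd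
  rw [sum_congr rfl fun d hd => if_congr (hsupp d hd) rfl rfl, sum_ite_eq']
  split_ifs with h
  · rfl
  · exact notMem_support_iff.1 h

lemma totalDegree_le_card_of_degreeOf_le_one [Fintype σ] {f : MvPolynomial σ R}
    (hf : ∀ i, degreeOf i f ≤ 1) : f.totalDegree ≤ Fintype.card σ := by
  refine Finset.sup_le fun d hd => ?_
  rw [Finsupp.sum_fintype _ _ fun _ => rfl, Fintype.card_eq_sum_ones]
  exact sum_le_sum fun i _ => degreeOf_le_iff.1 (hf i) d hd

lemma totalDegree_eq_card_of_degreeOf_le_one [Fintype σ] {f : MvPolynomial σ R}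
    (hf : ∀ i, degreeOf i f ≤ 1) (h : coeff (Finsupp.equivFunOnFinite.symm 1) f ≠ 0) :
    f.totalDegree = Fintype.card σ := by
  refine (totalDegree_le_card_of_degreeOf_le_one hf).antisymm ?_
  refine le_of_eq_of_le ?_ (le_totalDegree (mem_support_iff.2 h))
  simp [Finsupp.sum_fintype]

lemma sum_neg_one_pow_card_compl_mul_eq_fwdDiff_iter [Fintype σ] [DecidableEq σ] (g : R → R)
    (y : R) :
    ∑ S : Finset σ, (-1) ^ #Sᶜ * g (y + #S) = (Δ_[1])^[Fintype.card σ] g y := by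
  simp_rw [fwdDiff_iter_eq_sum_shift, card_compl, ← powerset_univ]
  rw [sum_powerset_apply_card (fun k => (-1) ^ (Fintype.card σ - k) * g (y + k)), card_univ]
  simp [zsmul_eq_mul, nsmul_eq_mul, mul_assoc, mul_left_comm]

end

lemma fwdDiff_iter_inv {F : Type*} [Field F] (m : ℕ) (y : F) (hy : ∀ j ≤ m, y + j ≠ 0) :
    (Δ_[1])^[m] (·⁻¹) y = (-1) ^ m * m ! * (∏ j ∈ range (m + 1), (y + j))⁻¹ := by
  induction m generalizing y with
  | zero => simp
  | succ m ih =>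
    have hshift : ∀ j ≤ m, y + 1 + j ≠ 0 := fun j hj => by
      simpa [add_assoc, add_comm (1 : F)] using hy (j + 1) (by omega)
    have hy₀ : y ≠ 0 := by simpa using hy 0 (by omega)
    have hlast : y + (m + 1) ≠ 0 := by exact_mod_cast hy (m + 1) le_rfl
    have e₁ : (∏ j ∈ range (m + 1), (y + j))⁻¹ =
        (y + (m + 1)) * (∏ j ∈ range (m + 2), (y + j))⁻¹ := by
      rw [prod_range_succ _ (m + 1)]; push_cast; field_simp
    have e₂ : (∏ j ∈ range (m + 1), (y + 1 + j))⁻¹ =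
        y * (∏ j ∈ range (m + 2), (y + j))⁻¹ := by
      rw [prod_range_succ' _ (m + 1)]; simp [add_assoc, add_comm (1 : F)]; field_simp
    rw [Function.iterate_succ_apply', fwdDiff, ih y fun j hj => hy j (by omega), ih (y + 1) hshift,
      e₁, e₂, Nat.factorial_succ]
    push_cast
    ring

lemma natCast_factorial_ne_zero_of_charP {F : Type*} [Field F] {p : ℕ} [CharP F p] {n : ℕ}
    (hp : p = 0 ∨ n < p) : (n ! : F) ≠ 0 := by
  rw [Ne, CharP.cast_eq_zero_iff F p]
  rcases hp with rfl | hp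
  · simpa using n.factorial_ne_zero
  · have hprime := (CharP.char_is_prime_or_zero F p).resolve_right (by omega)
    rw [hprime.dvd_factorial]
    omega

/-- If `f` is a multilinear polynomial over a field of characteristic `0` or `> n`,
`β ∉ {0,…,n}`, and `f · (x₁+⋯+xₙ−β) ≡ 1` modulo the ideal generated by the `xᵢ²−xᵢ`,
then `deg f = n`. -/
theorem stmt0 {F : Type*} [Field F] (n : ℕ) (p : ℕ) [CharP F p] (hp : p = 0 ∨ n < p)
    (β : F) (hβ : ∀ k : ℕ, k ≤ n → β ≠ (k : F))
    (f : MvPolynomial (Fin n) F)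
    (hml : ∀ i : Fin n, MvPolynomial.degreeOf i f ≤ 1)
    (hf : f * ((∑ i : Fin n, X i) - C β) - 1 ∈
      Ideal.span (Set.range fun i : Fin n => (X i : MvPolynomial (Fin n) F) ^ 2 - X i)) :
    f.totalDegree = n := by
  have hβ' : ∀ k ≤ n, -β + k ≠ 0 := fun k hk h => hβ k hk (by linear_combination -h)
  have hvertex : ∀ S : Finset (Fin n), eval (cubeVertex S) f = (-β + #S)⁻¹ := by
    intro S
    have h := eval_eq_zero_of_mem_span_X_sq_sub_X (cubeVertex_sq S) hf
    rw [map_sub, map_mul, map_sub, eval_cubeVertex_sum_X, eval_C, map_one, sub_eq_zero] at h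
    exact eq_inv_of_mul_eq_one_left (by rw [← h]; ring)
  have hcoeff : coeff (Finsupp.equivFunOnFinite.symm 1) f =
      (-1) ^ n * n ! * (∏ k ∈ range (n + 1), (-β + k))⁻¹ := by
    rw [coeff_one_eq_sum_neg_one_pow_mul_eval_cubeVertex hml, ← fwdDiff_iter_inv n (-β) hβ']
    simp_rw [hvertex]
    simpa using sum_neg_one_pow_card_compl_mul_eq_fwdDiff_iter (σ := Fin n) (·⁻¹) (-β)
  have hprod : ∏ k ∈ range (n + 1), (-β + k) ≠ 0 :=
    prod_ne_zero_iff.2 fun k hk => hβ' k (Nat.lt_succ_iff.1 (mem_range.1 hk))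
  simpa using totalDegree_eq_card_of_degreeOf_le_one hml (by
    rw [hcoeff]
    exact mul_ne_zero (mul_ne_zero (by simp) (natCast_factorial_ne_zero_of_charP hp))
      (inv_ne_zero hprod))
end

section
/- Let F be a field with characteristic greater than n (or zero), and β ∈ F with β ∉ {0,1,...,n}. If f ∈ F[x_1,...,x_n] is any polynomial (not necessarily multilinear) satisfying f(x)·(x_1+⋯+x_n−β) ≡ 1 modulo the ideal generated by {x_i²−x_i}, then deg f ≥ n. -/
open MvPolynomial Finset

lemma fd {F : Type*} [Field F] (m : ℕ) : ∀ (y : F), (∀ j, j ≤ m → y + (j:F) ≠ 0) →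
    ∑ i ∈ Finset.range (m+1), (-1:F)^i * (m.choose i) * (y + i)⁻¹
      = (m.factorial : F) * (∏ j ∈ Finset.range (m+1), (y + j))⁻¹ := by
  induction m with
  | zero => intro y hy; simp
  | succ m ih =>
    intro y hy
    have h0 : ∀ j, j ≤ m → y + (j:F) ≠ 0 := fun j hj => hy j (Nat.le_succ_of_le hj)
    have h1 : ∀ j, j ≤ m → (y+1) + (j:F) ≠ 0 := by
      intro j hj
      have := hy (j+1) (by omega)
      push_cast at this ⊢
      intro h; apply this; linear_combination h
    have key : ∑ i ∈ Finset.range (m+2), (-1:F)^i * ((m+1).choose i) * (y + i)⁻¹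
        = (∑ i ∈ Finset.range (m+1), (-1:F)^i * (m.choose i) * (y + i)⁻¹)
          - ∑ i ∈ Finset.range (m+1), (-1:F)^i * (m.choose i) * ((y+1) + i)⁻¹ := by
      rw [Finset.sum_range_succ' (fun i => (-1:F)^i * ((m+1).choose i) * (y + i)⁻¹) (m+1)]
      rw [Finset.sum_range_succ' (fun i => (-1:F)^i * (m.choose i) * (y + i)⁻¹) m]
      have ext : ∑ i ∈ Finset.range m, (-1:F)^(i+1) * (m.choose (i+1)) * (y + ↑(i+1))⁻¹
          = ∑ i ∈ Finset.range (m+1), (-1:F)^(i+1) * (m.choose (i+1)) * (y + ↑(i+1))⁻¹ := by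
        rw [Finset.sum_range_succ]
        simp [Nat.choose_succ_self]
      rw [ext, add_sub_right_comm, ← Finset.sum_sub_distrib]
      congr 1
      · apply Finset.sum_congr rfl
        intro i _
        have hc : ((m+1).choose (i+1) : F) = (m.choose i : F) + (m.choose (i+1) : F) := by
          rw [Nat.choose_succ_succ]; push_cast; ring
        have he : (y + 1 + (i:F)) = y + ((i:F)+1) := by ring
        rw [hc, he]
        push_cast
        ring
      · simp
    rw [key, ih y h0, ih (y+1) h1]
    have hP : (∏ j ∈ Finset.range (m+1), (y + (j:F))) ≠ 0 :=
      Finset.prod_ne_zero_iff.2 fun j hj => h0 j (by simpa using Finset.mem_range_succ_iff.mp hj)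
    have hQ : (∏ j ∈ Finset.range (m+1), ((y+1) + (j:F))) ≠ 0 :=
      Finset.prod_ne_zero_iff.2 fun j hj => h1 j (by simpa using Finset.mem_range_succ_iff.mp hj)
    have hR : (∏ j ∈ Finset.range (m+2), (y + (j:F))) ≠ 0 :=
      Finset.prod_ne_zero_iff.2 fun j hj => hy j (by simpa using Finset.mem_range_succ_iff.mp hj)
    have hlast : y + ((m+1:ℕ):F) ≠ 0 := hy (m+1) le_rfl
    have hRP : (∏ j ∈ Finset.range (m+2), (y + (j:F))) =
        (∏ j ∈ Finset.range (m+1), (y + (j:F))) * (y + ((m+1:ℕ):F)) := Finset.prod_range_succ _ _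
    have hRQ : (∏ j ∈ Finset.range (m+2), (y + (j:F))) =
        y * ∏ j ∈ Finset.range (m+1), ((y+1) + (j:F)) := by
      rw [Finset.prod_range_succ' (fun j => y + (j:F)) (m+1)]
      simp only [Nat.cast_zero, add_zero]
      rw [mul_comm]
      congr 1
      apply Finset.prod_congr rfl
      intro j _
      push_cast
      ring
    have hy0 : y ≠ 0 := by simpa using hy 0 (by omega)
    have e1 : (∏ j ∈ Finset.range (m+1), (y + (j:F)))⁻¹
        = (y + ((m+1:ℕ):F)) * (∏ j ∈ Finset.range (m+2), (y + (j:F)))⁻¹ := by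
      rw [hRP, mul_inv, mul_comm ((∏ j ∈ Finset.range (m+1), (y + (j:F)))⁻¹), ← mul_assoc,
        mul_inv_cancel₀ hlast, one_mul]
    have e2 : (∏ j ∈ Finset.range (m+1), ((y+1) + (j:F)))⁻¹
        = y * (∏ j ∈ Finset.range (m+2), (y + (j:F)))⁻¹ := by
      rw [hRQ, mul_inv, ← mul_assoc, mul_inv_cancel₀ hy0, one_mul]
    rw [e1, e2]
    have hfac : ((m+1).factorial : F) = ((m+1:ℕ):F) * (m.factorial : F) := by
      rw [Nat.factorial_succ]; push_cast; ring
    rw [show m + 1 + 1 = m + 2 from rfl, hfac]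
    push_cast
    ring


lemma altsum_zero {F : Type*} [Field F] {n : ℕ} (T : Finset (Fin n)) (hT : T ≠ univ) :
    ∑ S : Finset (Fin n), (-1:F)^S.card * (if T ⊆ S then 1 else 0) = 0 := by
  have h1 : ∑ S : Finset (Fin n), (-1:F)^S.card * (if T ⊆ S then 1 else 0)
      = ∑ S ∈ univ.filter (fun S => T ⊆ S), (-1:F)^S.card := by
    rw [Finset.sum_filter]
    apply Finset.sum_congr rfl
    intro S _
    by_cases h : T ⊆ S <;> simp [h]
  rw [h1]
  have h2 : ∑ S ∈ univ.filter (fun S => T ⊆ S), (-1:F)^S.card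
      = ∑ U ∈ Tᶜ.powerset, (-1:F)^(T.card + U.card) := by
    apply Finset.sum_nbij' (fun S => S \ T) (fun U => T ∪ U)
    · intro S hS
      rw [Finset.mem_powerset]
      intro x hx
      rw [Finset.mem_compl]
      exact (Finset.mem_sdiff.mp hx).2
    · intro U hU
      simp only [Finset.mem_filter, Finset.mem_univ, true_and]
      exact Finset.subset_union_left
    · intro S hS
      simp only [Finset.mem_filter, Finset.mem_univ, true_and] at hS
      exact Finset.union_sdiff_of_subset hS
    · intro U hU
      rw [Finset.mem_powerset] at hU
      rw [Finset.union_sdiff_cancel_left]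
      exact Finset.disjoint_left.mpr fun x hx hxU => (Finset.mem_compl.mp (hU hxU)) hx
    · intro S hS
      simp only [Finset.mem_filter, Finset.mem_univ, true_and] at hS
      congr 1
      have := Finset.card_sdiff_add_card_eq_card hS
      omega
  rw [h2]
  have h3 : ∑ U ∈ Tᶜ.powerset, (-1:F)^(T.card + U.card)
      = (-1:F)^T.card * ∑ U ∈ Tᶜ.powerset, (-1:F)^U.card := by
    rw [Finset.mul_sum]
    apply Finset.sum_congr rfl
    intro U _
    rw [pow_add]
  rw [h3]
  have h4 : ∑ U ∈ Tᶜ.powerset, (-1:F)^U.card = 0 := by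
    have hz := Finset.sum_powerset_neg_one_pow_card (x := Tᶜ)
    rw [if_neg (fun h => hT ((Finset.compl_eq_empty_iff T).mp h))] at hz
    calc ∑ U ∈ Tᶜ.powerset, (-1:F)^U.card
        = ((∑ U ∈ Tᶜ.powerset, (-1:ℤ)^U.card : ℤ) : F) := by push_cast; rfl
      _ = 0 := by rw [hz]; simp
  rw [h4, mul_zero]

/-- If `f` is any polynomial over a field of characteristic `0` or `> n`,
`β ∉ {0,…,n}`, and `f · (x₁+⋯+xₙ−β) ≡ 1` modulo the ideal generated by the `xᵢ²−xᵢ`,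
then `deg f ≥ n`. -/
theorem stmt1 {F : Type*} [Field F] (n : ℕ) (p : ℕ) [CharP F p] (hp : p = 0 ∨ n < p)
    (β : F) (hβ : ∀ k : ℕ, k ≤ n → β ≠ (k : F))
    (f : MvPolynomial (Fin n) F)
    (hf : f * ((∑ i : Fin n, X i) - C β) - 1 ∈
      Ideal.span (Set.range fun i : Fin n => (X i : MvPolynomial (Fin n) F) ^ 2 - X i)) :
    n ≤ f.totalDegree := by
  by_contra hlt
  push_neg at hlt
  -- characteristic: n! ≠ 0
  have hfac : (n.factorial : F) ≠ 0 := by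
    rcases CharP.char_is_prime_or_zero F p with hpr | h0
    · rcases hp with h0 | hnp
      · exact absurd h0 hpr.ne_zero
      · rw [Ne, CharP.cast_eq_zero_iff F p, hpr.dvd_factorial]
        omega
    · subst h0
      have : CharZero F := CharP.charP_to_charZero F
      exact_mod_cast Nat.cast_ne_zero.2 n.factorial_ne_zero
  -- evaluation at boolean points
  set χ : Finset (Fin n) → Fin n → F := fun S i => if i ∈ S then 1 else 0 with hχ
  have hev : ∀ S : Finset (Fin n), eval (χ S) f * ((S.card : F) - β) = 1 := by
    intro S
    have hker : Ideal.span (Set.range fun i : Fin n => (X i : MvPolynomial (Fin n) F) ^ 2 - X i)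
        ≤ RingHom.ker (eval (χ S)) := by
      rw [Ideal.span_le]
      rintro _ ⟨i, rfl⟩
      simp only [SetLike.mem_coe, RingHom.mem_ker, map_sub, map_pow, eval_X]
      by_cases h : i ∈ S <;> simp [hχ, h]
    have h2 := hker hf
    rw [RingHom.mem_ker, map_sub, map_one, map_mul, map_sub, eval_C, map_sum, sub_eq_zero] at h2
    have hs : ∑ i : Fin n, eval (χ S) (X i) = (S.card : F) := by
      simp [hχ]
    rw [hs] at h2
    exact h2
  have hne : ∀ S : Finset (Fin n), (S.card : F) - β ≠ 0 := by
    intro S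
    have := hβ S.card (by
      have := S.card_le_univ
      simpa using this)
    intro h
    exact this (sub_eq_zero.mp h).symm
  have hval : ∀ S : Finset (Fin n), eval (χ S) f = ((S.card : F) - β)⁻¹ := by
    intro S
    exact eq_inv_of_mul_eq_one_left (hev S)
  -- the alternating-sum functional is zero since deg < n
  have hL0 : ∑ S : Finset (Fin n), (-1:F)^S.card * eval (χ S) f = 0 := by
    have hevS : ∀ S : Finset (Fin n), eval (χ S) f
        = ∑ d ∈ f.support, coeff d f * (if d.support ⊆ S then (1:F) else 0) := by
      intro S
      rw [eval_eq]
      apply Finset.sum_congr rfl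
      intro d _
      congr 1
      by_cases hsub : d.support ⊆ S
      · rw [if_pos hsub]
        apply Finset.prod_eq_one
        intro i hi
        rw [hχ]
        simp only
        rw [if_pos (hsub hi), one_pow]
      · rw [if_neg hsub]
        obtain ⟨i, hi, hiS⟩ := Finset.not_subset.mp hsub
        apply Finset.prod_eq_zero hi
        rw [hχ]
        simp only
        rw [if_neg hiS]
        exact zero_pow (Finsupp.mem_support_iff.mp hi)
    calc ∑ S : Finset (Fin n), (-1:F)^S.card * eval (χ S) f
        = ∑ S : Finset (Fin n), ∑ d ∈ f.support,
            coeff d f * ((-1:F)^S.card * (if d.support ⊆ S then 1 else 0)) := by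
          apply Finset.sum_congr rfl
          intro S _
          rw [hevS S, Finset.mul_sum]
          apply Finset.sum_congr rfl
          intro d _
          ring
      _ = ∑ d ∈ f.support, coeff d f *
            ∑ S : Finset (Fin n), (-1:F)^S.card * (if d.support ⊆ S then 1 else 0) := by
          rw [Finset.sum_comm]
          apply Finset.sum_congr rfl
          intro d _
          rw [Finset.mul_sum]
      _ = 0 := by
          apply Finset.sum_eq_zero
          intro d hd
          rw [altsum_zero _ ?_, mul_zero]
          intro hTu
          have h1 : d.support.card ≤ d.sum fun _ e => e := by
            rw [Finset.card_eq_sum_ones, Finsupp.sum]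
            apply Finset.sum_le_sum
            intro i hi
            exact Nat.one_le_iff_ne_zero.mpr (Finsupp.mem_support_iff.mp hi)
          have h2 := MvPolynomial.le_totalDegree hd
          rw [hTu] at h1
          simp only [Finset.card_univ, Fintype.card_fin] at h1
          omega
  -- but it equals the nonzero finite difference
  have hLval : ∑ S : Finset (Fin n), (-1:F)^S.card * eval (χ S) f
      = ∑ k ∈ Finset.range (n+1), (-1:F)^k * (n.choose k) * ((-β) + k)⁻¹ := by
    have e0 : ∑ S : Finset (Fin n), (-1:F)^S.card * eval (χ S) f
        = ∑ S ∈ (univ : Finset (Fin n)).powerset, (-1:F)^S.card * ((S.card:F) - β)⁻¹ := by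
      rw [Finset.powerset_univ]
      apply Finset.sum_congr rfl
      intro S _
      rw [hval S]
    rw [e0, Finset.sum_powerset, Finset.card_univ, Fintype.card_fin]
    apply Finset.sum_congr rfl
    intro k hk
    have e1 : ∑ t ∈ Finset.powersetCard k (univ : Finset (Fin n)),
          (-1:F)^t.card * ((t.card:F) - β)⁻¹
        = ∑ _t ∈ Finset.powersetCard k (univ : Finset (Fin n)), (-1:F)^k * ((k:F) - β)⁻¹ := by
      apply Finset.sum_congr rfl
      intro t ht
      rw [(Finset.mem_powersetCard.mp ht).2]
    rw [e1, Finset.sum_const, Finset.card_powersetCard, Finset.card_univ, Fintype.card_fin,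
      nsmul_eq_mul]
    rw [show ((k:F) - β) = (-β) + k by ring]
    ring
  have hy : ∀ j, j ≤ n → (-β) + (j:F) ≠ 0 := by
    intro j hj h
    exact hβ j hj (by linear_combination -h)
  have hfd := fd n (-β) hy
  rw [hL0] at hLval
  rw [hfd] at hLval
  have hprod : (∏ j ∈ Finset.range (n+1), ((-β) + (j:F))) ≠ 0 :=
    Finset.prod_ne_zero_iff.2 fun j hj => hy j (by simpa using Finset.mem_range_succ_iff.mp hj)
  exact hfac (by
    rcases mul_eq_zero.mp hLval.symm with h | h
    · exact h
    · exact absurd (inv_eq_zero.mp h) hprod)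
end

section
/- Let F be a field and let f ∈ F[x_1,...,x_n] be a nonzero multilinear polynomial with exactly s monomials (s nonzero coefficients). Then every nonzero multiple g·f of f (with g ∈ F[x_1,...,x_n] nonzero) has at least s monomials. -/
/-!
Induct on the number of variables. Write a multilinear `f` as `f₁ z + f₀` and `g = ∑ gᵢ zⁱ`
with `g_{d₀}` and `g_{d₁}` its lowest and highest nonzero coefficients in the last variable `z`.
The coefficient of `g f` at `z^{d₁+1}` is `g_{d₁} f₁` and at `z^{d₀}` it is `g_{d₀} f₀`; these two
degrees differ, so by induction `g f` has at least `#f₁ + #f₀ = #f` monomials.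
-/

open Finset

namespace Polynomial

variable {R : Type*} [Semiring R]

theorem coeff_mul_natTrailingDegree (p q : R[X]) :
    (p * q).coeff p.natTrailingDegree = p.trailingCoeff * q.coeff 0 := by
  rw [coeff_mul]
  refine sum_eq_single_of_mem (p.natTrailingDegree, 0) (by simp) ?_
  rintro ⟨i, j⟩ hij hne
  rw [HasAntidiagonal.mem_antidiagonal] at hij
  have hi : i < p.natTrailingDegree := by grind
  rw [coeff_eq_zero_of_lt_natTrailingDegree hi, zero_mul]

theorem sum_support_le_sum_support_mul_of_natDegree_le_one (c : R → ℕ) (hc : c 0 = 0)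
    {p q : R[X]} (hp : p.natDegree ≤ 1) (hq : q ≠ 0)
    (hpc : ∀ i, ∀ b ≠ 0, c (p.coeff i) ≤ c (b * p.coeff i)) :
    ∑ i ∈ p.support, c (p.coeff i) ≤ ∑ i ∈ (q * p).support, c ((q * p).coeff i) := by
  have hbot : (q * p).coeff q.natTrailingDegree = q.trailingCoeff * p.coeff 0 :=
    coeff_mul_natTrailingDegree q p
  have htop : (q * p).coeff (q.natDegree + 1) = q.leadingCoeff * p.coeff 1 :=
    coeff_mul_add_eq_of_natDegree_le le_rfl hp
  have hne : q.natTrailingDegree ≠ q.natDegree + 1 :=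
    (Nat.lt_succ_of_le (natTrailingDegree_le_natDegree q)).ne
  have hsupp : p.support ⊆ range 2 := fun i hi =>
    mem_range.mpr (Nat.lt_succ_of_le ((le_natDegree_of_mem_supp i hi).trans hp))
  calc ∑ i ∈ p.support, c (p.coeff i)
      ≤ ∑ i ∈ range 2, c (p.coeff i) := sum_le_sum_of_subset hsupp
    _ = c (p.coeff 0) + c (p.coeff 1) := by simp [sum_range_succ]
    _ ≤ c ((q * p).coeff q.natTrailingDegree) + c ((q * p).coeff (q.natDegree + 1)) := by
      rw [hbot, htop]
      exact add_le_add (hpc 0 _ (mt trailingCoeff_eq_zero.mp hq))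
        (hpc 1 _ (leadingCoeff_ne_zero.mpr hq))
    _ = ∑ i ∈ {q.natTrailingDegree, q.natDegree + 1}, c ((q * p).coeff i) :=
      (sum_pair (f := fun i => c ((q * p).coeff i)) hne).symm
    _ ≤ ∑ i ∈ (q * p).support, c ((q * p).coeff i) :=
      sum_le_sum_of_ne_zero fun i _ hi => mem_support_iff.mpr fun h0 => hi (by rw [h0, hc])

end Polynomial

namespace MvPolynomial

variable {R : Type*} [CommSemiring R]

theorem card_support_eq_sum_card_support_coeff_finSuccEquiv {n : ℕ}
    (p : MvPolynomial (Fin (n + 1)) R) :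
    #p.support = ∑ i ∈ (finSuccEquiv R n p).support, #((finSuccEquiv R n p).coeff i).support := by
  classical
  have hsupp : p.support = (finSuccEquiv R n p).support.biUnion
      fun i => ((finSuccEquiv R n p).coeff i).support.image (Finsupp.cons i) := by
    ext m
    simp only [mem_biUnion, mem_image]
    constructor
    · intro hm
      refine ⟨m 0, ?_, m.tail, ?_, m.cons_tail⟩
      · rw [support_finSuccEquiv]
        exact mem_image_of_mem _ hm
      · rwa [mem_support_coeff_finSuccEquiv, Finsupp.cons_tail]
    · rintro ⟨i, _, m', hm', rfl⟩
      exact mem_support_coeff_finSuccEquiv.1 hm'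
  rw [hsupp, card_biUnion]
  · exact sum_congr rfl fun i _ => card_image_of_injective _ (Finsupp.cons_right_injective i)
  · intro a _ b _ hab
    simp only [disjoint_left, mem_image]
    rintro _ ⟨m, _, rfl⟩ ⟨m', _, hm'⟩
    exact hab (by simpa using DFunLike.congr_fun hm'.symm 0)

theorem card_support_le_card_support_mul_of_degreeOf_le_one [NoZeroDivisors R] {n : ℕ}
    {f : MvPolynomial (Fin n) R} (hf : ∀ i, degreeOf i f ≤ 1) {g : MvPolynomial (Fin n) R}
    (hg : g ≠ 0) : #f.support ≤ #(g * f).support := by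
  induction n with
  | zero =>
    rcases eq_or_ne f 0 with rfl | hf0
    · simp
    have hcard : #f.support ≤ 1 := card_le_one.mpr fun a _ b _ => Subsingleton.elim a b
    have hpos : 0 < #(g * f).support :=
      card_pos.mpr (support_nonempty.mpr (mul_ne_zero hg hf0))
    omega
  | succ n ih =>
    rw [card_support_eq_sum_card_support_coeff_finSuccEquiv,
      card_support_eq_sum_card_support_coeff_finSuccEquiv, map_mul]
    exact Polynomial.sum_support_le_sum_support_mul_of_natDegree_le_one
      (fun p => #(support p)) (by simp) (by rw [natDegree_finSuccEquiv]; exact hf 0)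
      ((map_ne_zero_iff _ (finSuccEquiv R n).injective).mpr hg)
      fun i _ hb => ih (fun j => (degreeOf_coeff_finSuccEquiv f j i).trans (hf j.succ)) hb

end MvPolynomial

open MvPolynomial

theorem stmt5_general {F : Type*} [Field F] (n : ℕ) (f : MvPolynomial (Fin n) F)
    (hml : ∀ i : Fin n, MvPolynomial.degreeOf i f ≤ 1) (s : ℕ) (hs : f.support.card = s) :
    ∀ g : MvPolynomial (Fin n) F, g ≠ 0 → s ≤ (g * f).support.card := fun _ hg =>
  hs ▸ card_support_le_card_support_mul_of_degreeOf_le_one hml hg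

/-- Every nonzero multiple of a nonzero multilinear polynomial with `s` monomials has at
least `s` monomials. -/
theorem stmt5 {F : Type*} [Field F] (n : ℕ) (f : MvPolynomial (Fin n) F) (hf : f ≠ 0)
    (hml : ∀ i : Fin n, MvPolynomial.degreeOf i f ≤ 1) (s : ℕ) (hs : f.support.card = s) :
    ∀ g : MvPolynomial (Fin n) F, g ≠ 0 → s ≤ (g * f).support.card :=
  stmt5_general n f hml s hs
end

section
/- Let F be a field of characteristic zero (or characteristic > n). Every nonzero multiple of the polynomial (x_1+1)(x_2+1)⋯(x_n+1) in F[x_1,...,x_n] has at least 2^n monomials. -/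
/-!
Induct on `n`. Viewing `g · ∏ (xᵢ + 1)` as a polynomial in `x₀` over `R[x₁, …, xₙ₋₁]`, it is
`q · P` with `q = g · (x₀ + 1)` and `P = ∏_{i ≥ 1} (xᵢ + 1)` free of `x₀`, so its `x₀ᵏ`-coefficient
is `qₖ · P`, which has at least `2ⁿ⁻¹` terms whenever `qₖ ≠ 0`. As `q` vanishes at `x₀ = -1`, it
is not a monomial, so at least two `qₖ` are nonzero; monomials with distinct `x₀`-degrees are
distinct, so the counts add up to at least `2 · 2ⁿ⁻¹`.
-/

open MvPolynomial Finset

theorem Polynomial.two_le_card_support_of_isRoot_of_isUnit {R : Type*} [Semiring R]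
    {p : Polynomial R} {a : R} (ha : IsUnit a) (hp : p ≠ 0) (hroot : p.IsRoot a) :
    2 ≤ #p.support := by
  by_contra! hcard
  obtain ⟨k, c, rfl⟩ := Polynomial.card_support_le_one_iff_monomial.mp (Nat.le_of_lt_succ hcard)
  have hc : c * a ^ k = 0 := by simpa using hroot
  exact hp (by rw [(ha.pow k).mul_left_eq_zero.mp hc, Polynomial.monomial_zero_right])

theorem MvPolynomial.card_support_eq_sum_card_support_coeff_finSuccEquiv_s6 {R : Type*}
    [CommSemiring R] {n : ℕ} (f : MvPolynomial (Fin (n + 1)) R) :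
    #f.support = ∑ i ∈ (finSuccEquiv R n f).support, #((finSuccEquiv R n f).coeff i).support := by
  classical
  have hmaps : (f.support : Set (Fin (n + 1) →₀ ℕ)).MapsTo (fun m => m 0)
      (finSuccEquiv R n f).support := fun m hm => by
    rw [support_finSuccEquiv]
    exact mem_image_of_mem _ hm
  rw [card_eq_sum_card_fiberwise hmaps]
  refine sum_congr rfl fun i _ => ?_
  rw [← image_support_finSuccEquiv, card_image_of_injective _ (Finsupp.cons_right_injective i)]

theorem MvPolynomial.finSuccEquiv_mul_prod_X_add_one {R : Type*} [CommSemiring R] {n : ℕ}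
    (g : MvPolynomial (Fin (n + 1)) R) :
    finSuccEquiv R n (g * ∏ i, (X i + 1)) =
      finSuccEquiv R n g * (Polynomial.X + 1) * Polynomial.C (∏ i : Fin n, (X i + 1)) := by
  simp [Fin.prod_univ_succ, map_prod, finSuccEquiv_X_zero, finSuccEquiv_X_succ, mul_assoc]

theorem MvPolynomial.two_pow_le_card_support_mul_prod_X_add_one {R : Type*} [CommRing R]
    (n : ℕ) {g : MvPolynomial (Fin n) R} (hg : g ≠ 0) : 2 ^ n ≤ #(g * ∏ i, (X i + 1)).support := by
  induction n with
  | zero => simpa [Nat.one_le_iff_ne_zero] using hg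
  | succ n ih =>
    set P : MvPolynomial (Fin n) R := ∏ i, (X i + 1)
    set q := finSuccEquiv R n g * (Polynomial.X + 1)
    have hq : q ≠ 0 :=
      (Polynomial.monic_X_add_C 1).mul_left_ne_zero (EmbeddingLike.map_ne_zero_iff.mpr hg)
    have hq_two : 2 ≤ #q.support :=
      Polynomial.two_le_card_support_of_isRoot_of_isUnit isUnit_one.neg hq (by simp [q])
    have hsupport : (q * Polynomial.C P).support ⊆ q.support := fun k hk => by
      rw [Polynomial.mem_support_iff, Polynomial.coeff_mul_C] at hk
      exact Polynomial.mem_support_iff.mpr (left_ne_zero_of_mul hk)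
    calc 2 ^ (n + 1) = 2 * 2 ^ n := by ring
      _ ≤ #q.support * 2 ^ n := Nat.mul_le_mul_right _ hq_two
      _ = ∑ _k ∈ q.support, 2 ^ n := by rw [sum_const, smul_eq_mul]
      _ ≤ ∑ k ∈ q.support, #(q.coeff k * P).support :=
        sum_le_sum fun k hk => ih (Polynomial.mem_support_iff.mp hk)
      _ = ∑ k ∈ (q * Polynomial.C P).support, #((q * Polynomial.C P).coeff k).support := by
        simp only [Polynomial.coeff_mul_C]
        refine (sum_subset hsupport fun k _ hk => ?_).symm
        rw [← Polynomial.coeff_mul_C, Polynomial.notMem_support_iff.mp hk, support_zero,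
          card_empty]
      _ = _ := by
        rw [card_support_eq_sum_card_support_coeff_finSuccEquiv_s6, finSuccEquiv_mul_prod_X_add_one]

theorem stmt6_general {F : Type*} [Field F] (n : ℕ)
    (g : MvPolynomial (Fin n) F) (hg : g ≠ 0) :
    2 ^ n ≤ (g * ∏ i : Fin n, (X i + 1)).support.card :=
  two_pow_le_card_support_mul_prod_X_add_one n hg

/-- Over a field of characteristic `0` or `> n`, every nonzero multiple of
`(x₁+1)(x₂+1)⋯(xₙ+1)` has at least `2ⁿ` monomials. -/
theorem stmt6 {F : Type*} [Field F] (n : ℕ) (p : ℕ) [CharP F p] (hp : p = 0 ∨ n < p)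
    (g : MvPolynomial (Fin n) F) (hg : g ≠ 0) :
    2 ^ n ≤ (g * ∏ i : Fin n, (X i + 1)).support.card :=
  stmt6_general n g hg
end

section
/- For any field F and any integers 0 ≤ k < n with k+1 invertible in F, the elementary symmetric polynomials satisfy (x_1+⋯+x_n−β)·S_{n,k}(x) ≡ (k+1)·S_{n,k+1}(x) + (k−β)·S_{n,k}(x) modulo the ideal generated by {x_i²−x_i : 1 ≤ i ≤ n}, for any β ∈ F. -/
open MvPolynomial Finset

lemma double_count {R : Type*} [CommRing R] {n : ℕ} (y : Fin n → R) (k : ℕ) :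
    ∑ S ∈ (univ : Finset (Fin n)).powersetCard k, ∑ i ∈ Sᶜ, ∏ j ∈ insert i S, y j
      = ∑ T ∈ (univ : Finset (Fin n)).powersetCard (k + 1), (k + 1) • ∏ j ∈ T, y j := by
  have : ∑ T ∈ (univ : Finset (Fin n)).powersetCard (k + 1), (k + 1) • ∏ j ∈ T, y j
      = ∑ T ∈ (univ : Finset (Fin n)).powersetCard (k + 1), ∑ i ∈ T, ∏ j ∈ T, y j := by
    apply Finset.sum_congr rfl
    intro T hT
    rw [Finset.sum_const]
    congr 1
    exact ((Finset.mem_powersetCard.mp hT).2).symm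
  rw [this, Finset.sum_sigma', Finset.sum_sigma']
  apply Finset.sum_nbij' (fun p => ⟨insert p.2 p.1, p.2⟩) (fun p => ⟨p.1.erase p.2, p.2⟩)
  · rintro ⟨S, i⟩ hp
    simp only [Finset.mem_sigma, Finset.mem_powersetCard, Finset.mem_compl] at hp ⊢
    obtain ⟨⟨hS, hcard⟩, hi⟩ := hp
    refine ⟨⟨Finset.subset_univ _, ?_⟩, Finset.mem_insert_self _ _⟩
    rw [Finset.card_insert_of_notMem hi, hcard]
  · rintro ⟨T, i⟩ hp
    simp only [Finset.mem_sigma, Finset.mem_powersetCard, Finset.mem_compl] at hp ⊢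
    obtain ⟨⟨hT, hcard⟩, hi⟩ := hp
    refine ⟨⟨Finset.subset_univ _, ?_⟩, Finset.notMem_erase _ _⟩
    rw [Finset.card_erase_of_mem hi, hcard]
    omega
  · rintro ⟨S, i⟩ hp
    simp only [Finset.mem_sigma, Finset.mem_powersetCard, Finset.mem_compl] at hp
    simp [Finset.erase_insert hp.2]
  · rintro ⟨T, i⟩ hp
    simp only [Finset.mem_sigma, Finset.mem_powersetCard, Finset.mem_compl] at hp
    simp [Finset.insert_erase hp.2]
  · rintro ⟨S, i⟩ hp
    rfl

lemma key {R : Type*} [CommRing R] {n : ℕ} (y : Fin n → R) (hy : ∀ i, y i * y i = y i)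
    (k : ℕ) :
    (∑ i, y i) * (∑ S ∈ (univ : Finset (Fin n)).powersetCard k, ∏ i ∈ S, y i)
      = (k + 1) • (∑ T ∈ (univ : Finset (Fin n)).powersetCard (k + 1), ∏ i ∈ T, y i)
        + k • (∑ S ∈ (univ : Finset (Fin n)).powersetCard k, ∏ i ∈ S, y i) := by
  rw [Finset.mul_sum]
  have step : ∀ S ∈ (univ : Finset (Fin n)).powersetCard k,
      (∑ i, y i) * ∏ i ∈ S, y i
        = k • ∏ i ∈ S, y i + ∑ i ∈ Sᶜ, ∏ j ∈ insert i S, y j := by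
    intro S hS
    have hcard := (Finset.mem_powersetCard.mp hS).2
    rw [← Finset.sum_add_sum_compl S, add_mul, Finset.sum_mul, Finset.sum_mul]
    congr 1
    · rw [← hcard, ← Finset.sum_const]
      apply Finset.sum_congr rfl
      intro i hi
      rw [← Finset.mul_prod_erase _ _ hi, ← mul_assoc, hy, Finset.mul_prod_erase _ _ hi]
    · apply Finset.sum_congr rfl
      intro i hi
      rw [Finset.prod_insert (Finset.mem_compl.mp hi)]
  rw [Finset.sum_congr rfl step, Finset.sum_add_distrib, ← Finset.smul_sum, double_count,
    ← Finset.smul_sum, add_comm]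

set_option synthInstance.maxHeartbeats 400000 in
set_option maxHeartbeats 1000000 in
/-- For `0 ≤ k < n` with `k+1` invertible in `F`, and any `β ∈ F`,
`(x₁+⋯+xₙ−β)·S_{n,k} ≡ (k+1)·S_{n,k+1} + (k−β)·S_{n,k}` modulo the ideal generated by the
`xᵢ²−xᵢ`, where `S_{n,k}` is the `k`-th elementary symmetric polynomial. -/
theorem stmt7 {F : Type*} [Field F] (n k : ℕ) (hk : k < n) (hinv : ((k : F) + 1) ≠ 0)
    (β : F) :
    ((∑ i : Fin n, X i) - C β) * MvPolynomial.esymm (Fin n) F k -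
      (C ((k : F) + 1) * MvPolynomial.esymm (Fin n) F (k + 1) +
        C ((k : F) - β) * MvPolynomial.esymm (Fin n) F k) ∈
      Ideal.span (Set.range fun i : Fin n => (X i : MvPolynomial (Fin n) F) ^ 2 - X i) := by
  set I := Ideal.span (Set.range fun i : Fin n => (X i : MvPolynomial (Fin n) F) ^ 2 - X i)
  rw [← Ideal.Quotient.eq_zero_iff_mem]
  set q := Ideal.Quotient.mk I with hq
  have hX : ∀ i : Fin n, q (X i) * q (X i) = q (X i) := by
    intro i
    have : (X i : MvPolynomial (Fin n) F) ^ 2 - X i ∈ I :=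
      Ideal.subset_span ⟨i, rfl⟩
    have h0 : q ((X i : MvPolynomial (Fin n) F) ^ 2 - X i) = 0 :=
      Ideal.Quotient.eq_zero_iff_mem.mpr this
    rw [map_sub, map_pow, sub_eq_zero, sq] at h0
    exact h0
  have hE : ∀ m : ℕ, q (MvPolynomial.esymm (Fin n) F m)
      = ∑ S ∈ (univ : Finset (Fin n)).powersetCard m, ∏ i ∈ S, q (X i) := by
    intro m
    rw [MvPolynomial.esymm, map_sum]
    exact Finset.sum_congr rfl fun S _ => map_prod q _ _
  have hkey := key (fun i => q (X i)) hX k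
  simp only [map_sub, map_add, map_mul, map_sum, map_natCast, map_one, hE]
  rw [sub_eq_zero, sub_mul, hkey, nsmul_eq_mul, nsmul_eq_mul]
  push_cast
  ring
end

section
/- Let F be a field with characteristic greater than n (or zero), and β ∈ F with β ∉ {0,...,n}. The unique multilinear polynomial f ∈ F[x_1,...,x_n] agreeing with 1/(x_1+⋯+x_n−β) on {0,1}^n is f(x) = −∑_{k=0}^{n} (k! / ∏_{j=0}^{k}(β−j)) · S_{n,k}(x), where S_{n,k} is the k-th elementary symmetric polynomial. -/
open MvPolynomial

private lemma key9 {F : Type*} [Field F] (m : ℕ) (β : F)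
    (hβ : ∀ j : ℕ, j ≤ m → β - (j : F) ≠ 0) :
    ∀ r : ℕ, r ≤ m →
      (β - (m : F)) * ∑ k ∈ Finset.range (r + 1),
        (Nat.factorial k : F) * (∏ j ∈ Finset.range (k + 1), (β - (j : F)))⁻¹ *
          (Nat.choose m k : F)
      = 1 - (Nat.descFactorial m (r + 1) : F) *
          (∏ j ∈ Finset.range (r + 1), (β - (j : F)))⁻¹ := by
  intro r
  induction r with
  | zero =>
    intro _
    have h0 : β - ((0 : ℕ) : F) ≠ 0 := hβ 0 (Nat.zero_le m)
    rw [Nat.cast_zero, sub_zero] at h0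
    simp only [zero_add, Finset.sum_range_one, Finset.prod_range_one, Nat.factorial_zero,
      Nat.choose_zero_right, Nat.cast_one, mul_one, one_mul, Nat.descFactorial_one,
      Nat.cast_zero, sub_zero]
    field_simp
  | succ r ih =>
    intro hr
    have hr' : r ≤ m := by omega
    have hPr : (∏ j ∈ Finset.range (r + 1), (β - (j : F))) ≠ 0 :=
      Finset.prod_ne_zero_iff.mpr fun j hj =>
        hβ j (by have := Finset.mem_range.mp hj; omega)
    have hb : β - ((r + 1 : ℕ) : F) ≠ 0 := hβ (r + 1) hr
    have hProd : (∏ j ∈ Finset.range (r + 1 + 1), (β - (j : F)))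
        = (∏ j ∈ Finset.range (r + 1), (β - (j : F))) * (β - ((r + 1 : ℕ) : F)) :=
      Finset.prod_range_succ _ _
    have hD1 : ((Nat.descFactorial m (r + 1) : ℕ) : F)
        = (Nat.factorial (r + 1) : F) * (Nat.choose m (r + 1) : F) := by
      rw [Nat.descFactorial_eq_factorial_mul_choose]; push_cast; ring
    have hD2 : ((Nat.descFactorial m (r + 1 + 1) : ℕ) : F)
        = ((m : F) - ((r + 1 : ℕ) : F)) * (Nat.descFactorial m (r + 1) : F) := by
      rw [Nat.descFactorial_succ, Nat.cast_mul, Nat.cast_sub hr]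
    rw [Finset.sum_range_succ, mul_add, ih hr', hProd, hD2, hD1, mul_inv]
    set Q := ∏ j ∈ Finset.range (r + 1), (β - (j : F)) with hQ
    set e := β - ((r + 1 : ℕ) : F) with he
    field_simp
    rw [he]
    push_cast
    ring

private lemma eval_esymm9 {F : Type*} [Field F] {n : ℕ} (T : Finset (Fin n)) (x : Fin n → F)
    (hx : ∀ i, x i = if i ∈ T then 1 else 0) (k : ℕ) :
    MvPolynomial.eval x (MvPolynomial.esymm (Fin n) F k) = (Nat.choose T.card k : F) := by
  classical
  rw [MvPolynomial.esymm, map_sum]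
  have h1 : ∀ S ∈ Finset.powersetCard k (Finset.univ : Finset (Fin n)),
      MvPolynomial.eval x (∏ i ∈ S, MvPolynomial.X i) = if S ⊆ T then 1 else 0 := by
    intro S _
    rw [map_prod]
    simp only [MvPolynomial.eval_X]
    by_cases hS : S ⊆ T
    · rw [if_pos hS]
      exact Finset.prod_eq_one fun i hi => by rw [hx i, if_pos (hS hi)]
    · rw [if_neg hS]
      obtain ⟨i, hiS, hiT⟩ := Finset.not_subset.mp hS
      exact Finset.prod_eq_zero hiS (by rw [hx i, if_neg hiT])
  rw [Finset.sum_congr rfl h1, Finset.sum_boole]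
  have h2 : (Finset.powersetCard k (Finset.univ : Finset (Fin n))).filter (fun S => S ⊆ T)
      = Finset.powersetCard k T := by
    ext S
    simp only [Finset.mem_filter, Finset.mem_powersetCard, Finset.subset_univ, true_and]
    tauto
  rw [h2, Finset.card_powersetCard]

private lemma multilinear_vanish9 {F : Type*} [Field F] {n : ℕ}
    (h : MvPolynomial (Fin n) F) (hdeg : ∀ i, MvPolynomial.degreeOf i h ≤ 1)
    (hval : ∀ x : Fin n → F, (∀ i, x i = 0 ∨ x i = 1) → MvPolynomial.eval x h = 0) :
    h = 0 := by
  classical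
  by_contra hne
  have hsupp : h.support.Nonempty := by
    rw [Finset.nonempty_iff_ne_empty]
    simpa [MvPolynomial.support_eq_empty] using hne
  obtain ⟨d, hd, hmin⟩ := Finset.exists_min_image h.support (fun e => e.support.card) hsupp
  have hle : ∀ e ∈ h.support, ∀ i, e i ≤ 1 :=
    fun e he i => le_trans (MvPolynomial.monomial_le_degreeOf i he) (hdeg i)
  set x : Fin n → F := fun i => if i ∈ d.support then 1 else 0 with hxdef
  have hx1 : ∀ i, i ∈ d.support → x i = 1 := fun i hi => by
    simp only [hxdef]; rw [if_pos hi]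
  have hx0 : ∀ i, i ∉ d.support → x i = 0 := fun i hi => by
    simp only [hxdef]; rw [if_neg hi]
  have hx : ∀ i, x i = 0 ∨ x i = 1 := fun i => by
    by_cases hi : i ∈ d.support
    · exact Or.inr (hx1 i hi)
    · exact Or.inl (hx0 i hi)
  have he0 := hval x hx
  rw [MvPolynomial.eval_eq'] at he0
  have hterm : ∀ e ∈ h.support, (∏ i, x i ^ e i) = if e = d then 1 else 0 := by
    intro e he
    by_cases hed : e = d
    · subst hed
      rw [if_pos rfl]
      refine Finset.prod_eq_one fun i _ => ?_
      by_cases hi : i ∈ e.support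
      · rw [hx1 i hi, one_pow]
      · rw [Finsupp.notMem_support_iff] at hi
        rw [hi, pow_zero]
    · rw [if_neg hed]
      have hsub : ¬ e.support ⊆ d.support := by
        intro hss
        have heq : e.support = d.support := Finset.eq_of_subset_of_card_le hss (hmin e he)
        apply hed
        ext i
        by_cases hi : i ∈ e.support
        · have hi' : i ∈ d.support := heq ▸ hi
          have h1 : e i ≠ 0 := Finsupp.mem_support_iff.mp hi
          have h2 : d i ≠ 0 := Finsupp.mem_support_iff.mp hi'
          have h3 := hle e he i
          have h4 := hle d hd i
          omega
        · have hi' : i ∉ d.support := heq ▸ hi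
          rw [Finsupp.notMem_support_iff] at hi hi'
          rw [hi, hi']
      obtain ⟨i, hie, hidn⟩ := Finset.not_subset.mp hsub
      refine Finset.prod_eq_zero (Finset.mem_univ i) ?_
      rw [hx0 i hidn, zero_pow (Finsupp.mem_support_iff.mp hie)]
  rw [Finset.sum_eq_single_of_mem d hd
    (fun e he hed => by rw [hterm e he, if_neg hed, mul_zero]), hterm d hd, if_pos rfl,
    mul_one] at he0
  exact MvPolynomial.mem_support_iff.mp hd he0

/-- Over a field of characteristic `0` or `> n`, with `β ∉ {0,…,n}`, the polynomial
`g = −∑_{k=0}^{n} (k!/∏_{j=0}^{k}(β−j))·S_{n,k}` is the unique multilinear polynomial agreeing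
with `1/(x₁+⋯+xₙ−β)` on `{0,1}ⁿ`: it is multilinear, it agrees with that function on the
cube, and any multilinear polynomial agreeing with that function on the cube equals it. -/
theorem stmt9 {F : Type*} [Field F] (n : ℕ) (p : ℕ) [CharP F p] (hp : p = 0 ∨ n < p)
    (β : F) (hβ : ∀ k : ℕ, k ≤ n → β ≠ (k : F))
    (g : MvPolynomial (Fin n) F)
    (hgdef : g = -∑ k ∈ Finset.range (n + 1),
      C ((Nat.factorial k : F) * (∏ j ∈ Finset.range (k + 1), (β - (j : F)))⁻¹) *
        MvPolynomial.esymm (Fin n) F k) :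
    (∀ i : Fin n, MvPolynomial.degreeOf i g ≤ 1) ∧
      (∀ x : Fin n → F, (∀ i, x i = 0 ∨ x i = 1) →
        MvPolynomial.eval x g = ((∑ i : Fin n, x i) - β)⁻¹) ∧
      (∀ f : MvPolynomial (Fin n) F, (∀ i : Fin n, MvPolynomial.degreeOf i f ≤ 1) →
        (∀ x : Fin n → F, (∀ i, x i = 0 ∨ x i = 1) →
          MvPolynomial.eval x f = ((∑ i : Fin n, x i) - β)⁻¹) → f = g) := by
  classical
  have hml : ∀ i : Fin n, MvPolynomial.degreeOf i g ≤ 1 := by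
    intro i
    rw [hgdef, MvPolynomial.degreeOf_neg]
    refine (MvPolynomial.degreeOf_sum_le _ _ _).trans ?_
    rw [Finset.sup_le_iff]
    intro k _
    refine (MvPolynomial.degreeOf_mul_le _ _ _).trans ?_
    rw [MvPolynomial.degreeOf_C, zero_add]
    rw [MvPolynomial.esymm]
    refine (MvPolynomial.degreeOf_sum_le _ _ _).trans ?_
    rw [Finset.sup_le_iff]
    intro S _
    refine (MvPolynomial.degreeOf_prod_le _ _ _).trans ?_
    calc ∑ j ∈ S, MvPolynomial.degreeOf i (MvPolynomial.X j : MvPolynomial (Fin n) F)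
        = ∑ j ∈ S, if i = j then 1 else 0 := by
          refine Finset.sum_congr rfl fun j _ => ?_
          rw [MvPolynomial.degreeOf_X]
      _ = if i ∈ S then 1 else 0 := Finset.sum_ite_eq S i (fun _ => 1)
      _ ≤ 1 := by split <;> omega
  have hev : ∀ x : Fin n → F, (∀ i, x i = 0 ∨ x i = 1) →
      MvPolynomial.eval x g = ((∑ i : Fin n, x i) - β)⁻¹ := by
    intro x hx
    set T : Finset (Fin n) := Finset.univ.filter (fun i => x i = 1) with hT
    have hxT : ∀ i, x i = if i ∈ T then 1 else 0 := by
      intro i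
      rcases hx i with h0 | h1
      · rw [if_neg (by simp [hT, h0])]
        exact h0
      · rw [if_pos (by simp [hT, h1])]
        exact h1
    set m : ℕ := T.card with hm
    have hmn : m ≤ n := by
      have := Finset.card_filter_le (Finset.univ : Finset (Fin n)) (fun i => x i = 1)
      simpa [hm, hT] using this
    have hsum : (∑ i : Fin n, x i) = (m : F) := by
      rw [Finset.sum_congr rfl (fun i _ => hxT i), Finset.sum_ite_mem,
        Finset.univ_inter, Finset.sum_const, nsmul_eq_mul, mul_one]
    have hne : ∀ j : ℕ, j ≤ m → β - (j : F) ≠ 0 :=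
      fun j hj => sub_ne_zero.mpr (hβ j (le_trans hj hmn))
    have hkey := key9 m β hne m le_rfl
    rw [Nat.descFactorial_eq_zero_iff_lt.mpr (Nat.lt_succ_self m), Nat.cast_zero,
      zero_mul, sub_zero] at hkey
    have hbm : β - (m : F) ≠ 0 := sub_ne_zero.mpr (hβ m hmn)
    have hS : ∑ k ∈ Finset.range (m + 1),
        (Nat.factorial k : F) * (∏ j ∈ Finset.range (k + 1), (β - (j : F)))⁻¹ *
          (Nat.choose m k : F) = (β - (m : F))⁻¹ :=
      eq_inv_of_mul_eq_one_left (by rw [mul_comm]; exact hkey)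
    have hSn : ∑ k ∈ Finset.range (n + 1),
        (Nat.factorial k : F) * (∏ j ∈ Finset.range (k + 1), (β - (j : F)))⁻¹ *
          (Nat.choose m k : F) = (β - (m : F))⁻¹ := by
      rw [← hS]
      refine (Finset.sum_subset (Finset.range_subset_range.mpr (by omega)) ?_).symm
      intro k hk hk'
      have : m < k := by
        simp only [Finset.mem_range] at hk hk'
        omega
      rw [Nat.choose_eq_zero_of_lt this, Nat.cast_zero, mul_zero]
    rw [hgdef, map_neg, map_sum]
    have hterm : ∀ k ∈ Finset.range (n + 1),
        MvPolynomial.eval x (C ((Nat.factorial k : F) *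
            (∏ j ∈ Finset.range (k + 1), (β - (j : F)))⁻¹) *
          MvPolynomial.esymm (Fin n) F k)
        = (Nat.factorial k : F) * (∏ j ∈ Finset.range (k + 1), (β - (j : F)))⁻¹ *
            (Nat.choose m k : F) := by
      intro k _
      rw [map_mul, MvPolynomial.eval_C, eval_esymm9 T x hxT k]
    rw [Finset.sum_congr rfl hterm, hSn, hsum, ← inv_neg, neg_sub]
  refine ⟨hml, hev, ?_⟩
  intro f hfdeg hfval
  have hz : f - g = 0 := by
    apply multilinear_vanish9
    · intro i
      exact (MvPolynomial.degreeOf_sub_le i f g).trans (max_le (hfdeg i) (hml i))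
    · intro x hx
      rw [map_sub, hfval x hx, hev x hx, sub_self]
  exact sub_eq_zero.mp hz
end

section
/- Let F be a field with characteristic greater than n (or zero), and β ∈ F with β ∉ {0,...,n}. The unique multilinear polynomial f agreeing with 1/(∑_{i=1}^n x_i − β) on {0,1}^n has exactly 2^n monomials with nonzero coefficients (i.e., every coefficient of every multilinear monomial is nonzero). -/
/-!
On `{0,1}ⁿ` a multilinear polynomial takes the value `f(1_U) = ∑_{S ⊆ U} c_S`, where `c_S` is the
coefficient of `∏_{i ∈ S} xᵢ`. Möbius inversion on the Boolean lattice gives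
`c_S = ∑_{T ⊆ S} (-1)^{|S \ T|} (|T| - β)⁻¹`, which only depends on `s = |S|` and is the `s`-th
forward difference of `k ↦ (k - β)⁻¹` at `0`, namely `(-1)^s s! / ∏_{j ≤ s} (j - β)`. This is
nonzero because `char F > n` and `β ∉ {0,…,n}`, so all `2ⁿ` squarefree monomials occur in `f`.
-/

open MvPolynomial Finset
open scoped Nat

namespace Finset

variable {α R : Type*} [DecidableEq α] [CommRing R]

theorem sum_Icc_neg_one_pow_card_sdiff {S U : Finset α} (h : S ⊆ U) :
    ∑ T ∈ Icc S U, (-1 : R) ^ #(U \ T) = if S = U then 1 else 0 := by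
  have hinj : Set.InjOn (S ∪ ·) (U \ S).powerset := fun V hV W hW hVW => by
    have hV := mem_powerset.1 hV; have hW := mem_powerset.1 hW
    simpa [union_sdiff_cancel_left (disjoint_sdiff.mono_right hV),
      union_sdiff_cancel_left (disjoint_sdiff.mono_right hW)] using congrArg (· \ S) hVW
  rw [Icc_eq_image_powerset h, sum_image hinj]
  calc ∑ V ∈ (U \ S).powerset, (-1 : R) ^ #(U \ (S ∪ V))
      = ∑ V ∈ (U \ S).powerset, 1 ^ #V * (-1 : R) ^ (#(U \ S) - #V) :=
        sum_congr rfl fun V hV => by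
          rw [one_pow, one_mul, show U \ (S ∪ V) = (U \ S) \ V from sdiff_sdiff_left.symm,
            card_sdiff_of_subset (mem_powerset.1 hV)]
    _ = if S = U then 1 else 0 := by
        rw [sum_pow_mul_eq_add_pow, add_neg_cancel, zero_pow_eq]
        exact if_congr (by rw [card_eq_zero, sdiff_eq_empty_iff_subset, subset_antisymm_iff,
          and_iff_right h]) rfl rfl

theorem moebius_inversion_powerset {a c : Finset α → R}
    (h : ∀ U, a U = ∑ S ∈ U.powerset, c S) (U : Finset α) :
    c U = ∑ T ∈ U.powerset, (-1) ^ #(U \ T) * a T := by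
  simp_rw [h, mul_sum]
  rw [sum_comm' (t' := U.powerset) (s' := fun S => Icc S U) fun T S => by
    simp only [mem_powerset, mem_Icc]
    exact ⟨fun ⟨hT, hS⟩ => ⟨⟨hS, hT⟩, hS.trans hT⟩, fun ⟨⟨hS, hT⟩, _⟩ => ⟨hT, hS⟩⟩]
  simp_rw [← sum_mul]
  rw [sum_eq_single_of_mem U (mem_powerset_self U) fun S hS hSU => by
    rw [sum_Icc_neg_one_pow_card_sdiff (mem_powerset.1 hS), if_neg hSU, zero_mul]]
  rw [sum_Icc_neg_one_pow_card_sdiff subset_rfl, if_pos rfl, one_mul]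

theorem sum_powerset_neg_one_pow_card_sdiff_mul_eq_fwdDiff_iter (u : ℕ → R) (S : Finset α) :
    ∑ T ∈ S.powerset, (-1) ^ #(S \ T) * u #T = (fwdDiff 1)^[#S] u 0 := by
  rw [fwdDiff_iter_eq_sum_shift, sum_congr rfl fun T hT => by
    rw [card_sdiff_of_subset (mem_powerset.1 hT)],
    sum_powerset_apply_card fun k => (-1) ^ (#S - k) * u k]
  refine sum_congr rfl fun k _ => ?_
  simp [zsmul_eq_mul, nsmul_eq_mul, mul_assoc, mul_left_comm]

noncomputable def toFinsupp (S : Finset α) : α →₀ ℕ := Multiset.toFinsupp S.1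

theorem toFinsupp_apply (S : Finset α) (i : α) : S.toFinsupp i = if i ∈ S then 1 else 0 :=
  Multiset.count_eq_of_nodup S.nodup

@[simp]
theorem support_toFinsupp (S : Finset α) : S.toFinsupp.support = S := val_toFinset S

theorem toFinsupp_injective : Function.Injective (toFinsupp : Finset α → α →₀ ℕ) :=
  Multiset.toFinsupp.injective.comp val_injective

theorem toFinsupp_support {d : α →₀ ℕ} (hd : ∀ i, d i ≤ 1) : d.support.toFinsupp = d := by
  ext i
  have := hd i
  simp only [toFinsupp_apply, Finsupp.mem_support_iff]
  split_ifs <;> omega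

end Finset

theorem fwdDiff_iter_inv_natCast_sub {F : Type*} [Field F] (β : F) (s m : ℕ)
    (h : ∀ j ≤ s, (m : F) + j ≠ β) :
    (fwdDiff 1)^[s] (fun k : ℕ => ((k : F) - β)⁻¹) m =
      (-1) ^ s * s ! * (∏ j ∈ range (s + 1), ((m : F) + j - β))⁻¹ := by
  induction s generalizing m with
  | zero => simp
  | succ s ih =>
    have hsucc : ∀ j ≤ s, ((m + 1 : ℕ) : F) + j ≠ β := fun j hj => by
      have := h (j + 1) (by omega)
      push_cast at this ⊢
      rwa [add_assoc, add_comm 1]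
    rw [Function.iterate_succ_apply', fwdDiff, ih m fun j hj => h j (by omega), ih (m + 1) hsucc]
    set Q := ∏ j ∈ range s, ((m : F) + (j + 1) - β)
    have hP₀ : ∏ j ∈ range (s + 1), ((m : F) + j - β) = (m - β) * Q := by
      rw [prod_range_succ', mul_comm]; simp [Q]
    have hP₁ : ∏ j ∈ range (s + 1), (((m + 1 : ℕ) : F) + j - β) = Q * (m + (s + 1) - β) := by
      rw [prod_range_succ]; push_cast; simp only [Q, add_assoc, add_comm (1 : F)]
    have hP : ∏ j ∈ range (s + 1 + 1), ((m : F) + j - β) = (m - β) * Q * (m + (s + 1) - β) := by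
      rw [prod_range_succ, hP₀]; push_cast; ring
    have hQ : Q ≠ 0 := prod_ne_zero_iff.2 fun j hj => sub_ne_zero.2 <| by
      simpa using h (j + 1) (by simp at hj; omega)
    have hm : (m : F) - β ≠ 0 := sub_ne_zero.2 (by simpa using h 0 (by omega))
    have hms : (m : F) + (s + 1) - β ≠ 0 := sub_ne_zero.2 (by simpa using h (s + 1) le_rfl)
    rw [hP₀, hP₁, hP]
    field_simp
    rw [Nat.factorial_succ]
    push_cast
    ring

theorem CharP.cast_factorial_ne_zero {R : Type*} [NonAssocSemiring R] [NoZeroDivisors R]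
    [Nontrivial R] (p : ℕ) [CharP R p] {k : ℕ} (hk : p = 0 ∨ k < p) : (k ! : R) ≠ 0 := by
  rw [Ne, CharP.cast_eq_zero_iff R p]
  rcases CharP.char_is_prime_or_zero R p with hp | rfl
  · rw [hp.dvd_factorial]
    have := hp.pos
    omega
  · simpa using k.factorial_ne_zero

namespace MvPolynomial

variable {σ R : Type*} [DecidableEq σ]

theorem eval_indicator_monomial [CommSemiring R] (U : Finset σ) (d : σ →₀ ℕ) (a : R) :
    eval (fun i => if i ∈ U then 1 else 0) (monomial d a) = if d.support ⊆ U then a else 0 := by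
  rw [eval_monomial, Finsupp.prod]
  split_ifs with hd
  · rw [prod_eq_one fun i hi => by rw [if_pos (hd hi), one_pow], mul_one]
  · obtain ⟨i, hid, hiU⟩ := not_subset.1 hd
    rw [prod_eq_zero hid (by rw [if_neg hiU, zero_pow (Finsupp.mem_support_iff.1 hid)]), mul_zero]

variable [Fintype σ]

theorem support_subset_image_toFinsupp [CommSemiring R] {f : MvPolynomial σ R}
    (hf : ∀ i, degreeOf i f ≤ 1) : f.support ⊆ univ.image toFinsupp := fun d hd =>
  mem_image.2 ⟨d.support, mem_univ _,
    toFinsupp_support fun i => (monomial_le_degreeOf i hd).trans (hf i)⟩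

theorem eq_sum_monomial_toFinsupp [CommSemiring R] {f : MvPolynomial σ R}
    (hf : ∀ i, degreeOf i f ≤ 1) :
    f = ∑ S : Finset σ, monomial S.toFinsupp (coeff S.toFinsupp f) := by
  conv_lhs => rw [f.as_sum, sum_subset (support_subset_image_toFinsupp hf) fun d _ hd => by
    rw [notMem_support_iff.1 hd, map_zero]]
  exact sum_image fun S _ T _ h => toFinsupp_injective h

theorem eval_indicator_eq_sum_powerset [CommSemiring R] {f : MvPolynomial σ R}
    (hf : ∀ i, degreeOf i f ≤ 1) (U : Finset σ) :
    eval (fun i => if i ∈ U then 1 else 0) f = ∑ S ∈ U.powerset, coeff S.toFinsupp f := by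
  conv_lhs => rw [eq_sum_monomial_toFinsupp hf]
  simp only [map_sum, eval_indicator_monomial, support_toFinsupp, ← mem_powerset]
  rw [sum_ite_mem, univ_inter]

theorem coeff_toFinsupp_eq_sum_powerset [CommRing R] {f : MvPolynomial σ R}
    (hf : ∀ i, degreeOf i f ≤ 1) (S : Finset σ) :
    coeff S.toFinsupp f =
      ∑ T ∈ S.powerset, (-1) ^ #(S \ T) * eval (fun i => if i ∈ T then 1 else 0) f :=
  moebius_inversion_powerset (eval_indicator_eq_sum_powerset hf) S

end MvPolynomial

/-- Over a field of characteristic `0` or `> n`, with `β ∉ {0,…,n}`, the (unique) multilinear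
polynomial agreeing with `1/(∑ xᵢ − β)` on `{0,1}ⁿ` has exactly `2ⁿ` monomials. -/
theorem stmt10 {F : Type*} [Field F] (n : ℕ) (p : ℕ) [CharP F p] (hp : p = 0 ∨ n < p)
    (β : F) (hβ : ∀ k : ℕ, k ≤ n → β ≠ (k : F))
    (f : MvPolynomial (Fin n) F)
    (hml : ∀ i : Fin n, MvPolynomial.degreeOf i f ≤ 1)
    (hagree : ∀ x : Fin n → F, (∀ i, x i = 0 ∨ x i = 1) →
      MvPolynomial.eval x f = ((∑ i : Fin n, x i) - β)⁻¹) :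
    f.support.card = 2 ^ n := by
  have hcube (T : Finset (Fin n)) :
      eval (fun i => if i ∈ T then 1 else 0) f = ((#T : F) - β)⁻¹ := by
    rw [hagree _ fun i => by split_ifs <;> simp, sum_boole, filter_mem_eq_inter, univ_inter]
  have hcoeff (S : Finset (Fin n)) : coeff S.toFinsupp f ≠ 0 := by
    have hS : #S ≤ n := (card_le_univ S).trans_eq (Fintype.card_fin n)
    simp_rw [coeff_toFinsupp_eq_sum_powerset hml, hcube]
    rw [sum_powerset_neg_one_pow_card_sdiff_mul_eq_fwdDiff_iter (fun k => ((k : F) - β)⁻¹),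
      fwdDiff_iter_inv_natCast_sub β _ 0 fun j hj => by simpa using (hβ j (hj.trans hS)).symm]
    refine mul_ne_zero (mul_ne_zero (pow_ne_zero _ (neg_ne_zero.2 one_ne_zero))
      (CharP.cast_factorial_ne_zero p (by omega))) (inv_ne_zero ?_)
    exact prod_ne_zero_iff.2 fun j hj => sub_ne_zero.2 <| by
      simpa using (hβ j (by simp at hj; omega)).symm
  have hsupp : f.support = univ.image toFinsupp :=
    (support_subset_image_toFinsupp hml).antisymm
      (image_subset_iff.2 fun S _ => mem_support_iff.2 (hcoeff S))
  rw [hsupp, card_image_of_injective _ toFinsupp_injective, card_univ, Fintype.card_finset,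
    Fintype.card_fin]
end

section
/- Let F be a field, let α ∈ F^n, β ∈ F, and let A = {∑_{i=1}^n α_i x_i : x ∈ {0,1}^n} ⊆ F. If β ∉ A, then there exists a polynomial g ∈ F[x_1,...,x_n] such that g(x)·(∑_i α_i x_i − β) ≡ −p(β) modulo the ideal generated by {x_i²−x_i}, where p(t) = ∏_{a∈A}(t−a) and −p(β) is a nonzero element of F. Consequently the system {∑_i α_i x_i − β} ∪ {x_i²−x_i} generates the unit ideal in F[x_1,...,x_n]. -/
open MvPolynomial
open scoped Classical

set_option maxHeartbeats 1000000
set_option synthInstance.maxHeartbeats 200000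

private lemma idem_split {R ι : Type*} [CommRing R] {e : R} (he : e * e = e) (r c : R)
    (T : Finset ι) (f : ι → R) :
    ∏ a ∈ T, (r + c * e - f a) =
      (1 - e) * ∏ a ∈ T, (r - f a) + e * ∏ a ∈ T, (r + c - f a) := by
  classical
  induction T using Finset.induction_on with
  | empty => simp
  | @insert b T hb ih =>
    rw [Finset.prod_insert hb, Finset.prod_insert hb, Finset.prod_insert hb, ih]
    linear_combination (c * (∏ a ∈ T, (r + c - f a)) - c * (∏ a ∈ T, (r - f a))) * he

private lemma sub_dvd_prod_sub {R ι : Type*} [CommRing R] (x y : R)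
    (T : Finset ι) (f : ι → R) :
    (y - x) ∣ (∏ a ∈ T, (y - f a) - ∏ a ∈ T, (x - f a)) := by
  classical
  induction T using Finset.induction_on with
  | empty => simp
  | @insert b T hb ih =>
    rw [Finset.prod_insert hb, Finset.prod_insert hb]
    have h : (y - f b) * ∏ a ∈ T, (y - f a) - (x - f b) * ∏ a ∈ T, (x - f a)
        = (y - f b) * (∏ a ∈ T, (y - f a) - ∏ a ∈ T, (x - f a))
          + (y - x) * ∏ a ∈ T, (x - f a) := by ring
    rw [h]
    exact dvd_add (Dvd.dvd.mul_left ih _) (Dvd.intro _ rfl)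

/-- Let `A` be the set of values of the linear form `∑ αᵢxᵢ` on `{0,1}ⁿ` and suppose `β ∉ A`.
Then there is `g` with `g·(∑ αᵢxᵢ − β) ≡ −p(β)` modulo the boolean ideal, where
`p(t) = ∏_{a∈A}(t−a)` and `−p(β) ≠ 0`; consequently `{∑ αᵢxᵢ − β} ∪ {xᵢ²−xᵢ}` generates the
unit ideal. -/
theorem stmt12 {F : Type*} [Field F] (n : ℕ) (α : Fin n → F) (β : F)
    (A : Finset F)
    (hA : A = Finset.image
      (fun x : Fin n → Bool => ∑ i : Fin n, if x i then α i else 0) Finset.univ)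
    (hβ : β ∉ A) :
    (∃ g : MvPolynomial (Fin n) F,
        g * ((∑ i : Fin n, C (α i) * X i) - C β) - C (-(∏ a ∈ A, (β - a))) ∈
          Ideal.span (Set.range fun i : Fin n => (X i : MvPolynomial (Fin n) F) ^ 2 - X i)) ∧
      (-(∏ a ∈ A, (β - a)) ≠ 0) ∧
      Ideal.span ({(∑ i : Fin n, C (α i) * X i) - C β} ∪
          Set.range fun i : Fin n => (X i : MvPolynomial (Fin n) F) ^ 2 - X i) = ⊤ := by
  classical
  set I : Ideal (MvPolynomial (Fin n) F) :=
    Ideal.span (Set.range fun i : Fin n => (X i : MvPolynomial (Fin n) F) ^ 2 - X i) with hI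
  set φ := Ideal.Quotient.mk I with hφ
  -- key lemma: the product over the value set of the quotiented linear form vanishes
  have key : ∀ s : Finset (Fin n),
      ∏ a ∈ Finset.image (fun x : Fin n → Bool => ∑ i ∈ s, if x i then α i else 0)
          Finset.univ,
        (φ (∑ i ∈ s, C (α i) * X i) - φ (C a)) = 0 := by
    intro s
    induction s using Finset.induction_on with
    | empty =>
      have h0 : Finset.image (fun _ : Fin n → Bool => (0 : F)) Finset.univ = {0} := by
        simp [Finset.image_const Finset.univ_nonempty]
      simp [h0]
    | @insert j s hj ih =>
      set B := Finset.image (fun x : Fin n → Bool => ∑ i ∈ s, if x i then α i else 0)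
        Finset.univ with hB
      have hT : Finset.image
          (fun x : Fin n → Bool => ∑ i ∈ insert j s, if x i then α i else 0) Finset.univ
          = B ∪ B.image (· + α j) := by
        ext a
        simp only [Finset.mem_image, Finset.mem_union, Finset.mem_univ, true_and, hB]
        constructor
        · rintro ⟨x, rfl⟩
          rw [Finset.sum_insert hj]
          by_cases hx : x j
          · right
            exact ⟨∑ i ∈ s, if x i then α i else 0, ⟨x, rfl⟩, by simp [hx, add_comm]⟩
          · left
            exact ⟨x, by simp [hx]⟩
        · rintro (⟨x, rfl⟩ | ⟨b, ⟨x, rfl⟩, rfl⟩)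
          · refine ⟨Function.update x j false, ?_⟩
            rw [Finset.sum_insert hj, Function.update_self]
            simp only [if_neg Bool.false_ne_true, zero_add]
            exact Finset.sum_congr rfl fun i hi => by
              have hij : i ≠ j := by rintro rfl; exact hj hi
              rw [Function.update_of_ne hij]
          · refine ⟨Function.update x j true, ?_⟩
            rw [Finset.sum_insert hj, Function.update_self]
            simp only [if_pos rfl]
            rw [add_comm]
            congr 1
            exact Finset.sum_congr rfl fun i hi => by
              have hij : i ≠ j := by rintro rfl; exact hj hi
              rw [Function.update_of_ne hij]
      set e := φ (X j) with he'
      have he : e * e = e := by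
        have hmem : (X j : MvPolynomial (Fin n) F) ^ 2 - X j ∈ I :=
          Ideal.subset_span ⟨j, rfl⟩
        have := (Ideal.Quotient.eq_zero_iff_mem).mpr hmem
        rw [map_sub, map_pow, sub_eq_zero] at this
        calc e * e = φ (X j) ^ 2 := by rw [he', sq]
        _ = e := by rw [this, he']
      have hL : φ (∑ i ∈ insert j s, C (α i) * X i)
          = φ (∑ i ∈ s, C (α i) * X i) + φ (C (α j)) * e := by
        rw [Finset.sum_insert hj, map_add, map_mul, add_comm]
      rw [hT, hL]
      rw [idem_split he (φ (∑ i ∈ s, C (α i) * X i)) (φ (C (α j)))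
        (B ∪ B.image (· + α j)) (fun a => φ (C a))]
      have hB1 : B ⊆ B ∪ B.image (· + α j) := Finset.subset_union_left
      have hB2 : B.image (· + α j) ⊆ B ∪ B.image (· + α j) := Finset.subset_union_right
      have h1 : ∏ a ∈ B ∪ B.image (· + α j),
          (φ (∑ i ∈ s, C (α i) * X i) - φ (C a)) = 0 := by
        rw [← Finset.prod_sdiff hB1, ih, mul_zero]
      have h2 : ∏ a ∈ B ∪ B.image (· + α j),
          (φ (∑ i ∈ s, C (α i) * X i) + φ (C (α j)) - φ (C a)) = 0 := by
        rw [← Finset.prod_sdiff hB2]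
        have himg : ∏ a ∈ B.image (· + α j),
            (φ (∑ i ∈ s, C (α i) * X i) + φ (C (α j)) - φ (C a))
            = ∏ b ∈ B, (φ (∑ i ∈ s, C (α i) * X i) - φ (C b)) := by
          rw [Finset.prod_image (fun a _ b _ h => by
            exact add_right_cancel h)]
          refine Finset.prod_congr rfl fun b _ => ?_
          rw [C_add, map_add]
          ring
        rw [himg, ih, mul_zero]
      rw [h1, h2, mul_zero, mul_zero, add_zero]
  -- conclude p(L) ∈ I
  set L : MvPolynomial (Fin n) F := ∑ i : Fin n, C (α i) * X i with hL
  have hPL : ∏ a ∈ A, (L - C a) ∈ I := by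
    rw [← Ideal.Quotient.eq_zero_iff_mem, map_prod]
    have h := key Finset.univ
    rw [← hA] at h
    simp only [map_sub]
    exact h
  -- divisibility to get g
  have hdvd : (L - C β) ∣ (∏ a ∈ A, (L - C a) - ∏ a ∈ A, (C β - C a)) :=
    sub_dvd_prod_sub (C β) L A (fun a => C a)
  obtain ⟨g, hg⟩ := hdvd
  have hCprod : (∏ a ∈ A, (C β - C a) : MvPolynomial (Fin n) F)
      = C (∏ a ∈ A, (β - a)) := by
    rw [map_prod]
    exact Finset.prod_congr rfl fun a _ => (map_sub C β a).symm
  have hmain : g * (L - C β) - C (-(∏ a ∈ A, (β - a))) = ∏ a ∈ A, (L - C a) := by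
    rw [map_neg, ← hCprod]
    linear_combination -hg
  have hne : -(∏ a ∈ A, (β - a)) ≠ 0 := by
    rw [neg_ne_zero]
    exact Finset.prod_ne_zero_iff.mpr fun a ha => sub_ne_zero_of_ne fun h => hβ (h ▸ ha)
  refine ⟨⟨g, by rw [hmain]; exact hPL⟩, hne, ?_⟩
  -- the union generates the unit ideal
  set J := Ideal.span ({L - C β} ∪
    Set.range fun i : Fin n => (X i : MvPolynomial (Fin n) F) ^ 2 - X i) with hJ
  have hLJ : L - C β ∈ J := Ideal.subset_span (Or.inl rfl)
  have hIJ : I ≤ J := Ideal.span_mono Set.subset_union_right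
  have hCmem : C (-(∏ a ∈ A, (β - a))) ∈ J := by
    have h1 : g * (L - C β) ∈ J := J.mul_mem_left g hLJ
    have h2 : g * (L - C β) - C (-(∏ a ∈ A, (β - a))) ∈ J := by
      rw [hmain]; exact hIJ hPL
    have := J.sub_mem h1 h2
    simpa using this
  exact Ideal.eq_top_of_isUnit_mem J hCmem
    ((isUnit_iff_ne_zero.mpr hne).map (C : F →+* MvPolynomial (Fin n) F))
end

section
/- Let F be a field with char(F) > n (or zero), and β ∈ F \ {0,...,n}. If f ∈ F[x_1,...,x_n, y_1,...,y_n] satisfies f(x,y) = 1/(∑_{i=1}^n x_i y_i − β) for all x, y ∈ {0,1}^n, then the F-vector space spanned by the 2^n partial evaluations {f(x, 1_S) : S ⊆ [n]} ⊆ F[x] (where 1_S ∈ {0,1}^n is the indicator vector of S, and we identify each f(x,1_S) with its multilinearization) has dimension at least 2^n. -/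
/-!
Write `v_T` for the multilinearized partial evaluation `f(x, 1_T)`. On the cube, `v_T(1_U)` is
`1/(|U ∩ T| - β)`. Test the `v_T` against the Möbius functionals
`φ_M(q) = ∑_{U ⊆ M} (-1)^{|M| - |U|} q(1_U)`: if `M ⊄ T`, the summand does not see a coordinate
`j ∈ M \ T`, so the terms cancel in pairs `U`, `U ∪ {j}` and `φ_M(v_T) = 0`; and `φ_T(v_T)` is the
`|T|`-th forward difference of `k ↦ 1/(k - β)` at `0`, i.e. `±|T|! / ∏_{i ≤ |T|} (i - β)`, which is
nonzero since `char F > n` and `β ∉ {0, …, n}`. This triangularity makes the `2ⁿ` vectors `v_T`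
linearly independent.
-/

open MvPolynomial
open scoped Classical

/-- The multilinearization operator: each monomial `∏ xᵢ^{aᵢ}` is replaced by
`∏_{aᵢ ≥ 1} xᵢ`. -/
noncomputable def ml {F : Type*} [Field F] {n : ℕ} (f : MvPolynomial (Fin n) F) :
    MvPolynomial (Fin n) F :=
  ∑ d ∈ f.support,
    MvPolynomial.monomial (d.mapRange (fun a => min a 1) (by simp)) (MvPolynomial.coeff d f)

open Finset Nat fwdDiff

lemma natCast_factorial_ne_zero_of_charP_s17 {R : Type*} [NonAssocRing R] [NoZeroDivisors R]
    [Nontrivial R] (p : ℕ) [CharP R p] {m : ℕ} (hp : p = 0 ∨ m < p) : (m ! : R) ≠ 0 := by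
  rw [Ne, CharP.cast_eq_zero_iff R p]
  rcases hp with rfl | hmp
  · simpa using m.factorial_ne_zero
  · have hprime := (CharP.char_is_prime_or_zero R p).resolve_right (by omega)
    exact fun h => (hprime.dvd_factorial.mp h).not_gt hmp

lemma fwdDiff_iter_inv_add_natCast {F : Type*} [Field F] (m : ℕ) (x : F)
    (hx : ∀ i ≤ m, x + i ≠ 0) :
    Δ_[1] ^[m] (fun k : ℕ => (x + k)⁻¹) 0 =
      (-1) ^ m * m ! * (∏ i ∈ range (m + 1), (x + i))⁻¹ := by
  induction m generalizing x with
  | zero => simp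
  | succ m ih =>
    have hx₁ : ∀ i ≤ m, x + 1 + i ≠ 0 := fun i hi => by
      simpa [add_assoc, add_comm (1 : F)] using hx (i + 1) (by omega)
    have hshift : Δ_[1] ^[m] (fun k : ℕ => (x + k)⁻¹) 1 =
        Δ_[1] ^[m] (fun k : ℕ => (x + 1 + k)⁻¹) 0 := by
      rw [← zero_add 1, ← fwdDiff_iter_comp_add]
      simp [add_assoc, add_comm (1 : F)]
    rw [Function.iterate_succ_apply', fwdDiff, zero_add, hshift,
      ih x fun i hi => hx i (by omega), ih (x + 1) hx₁]
    have hprod : ∀ y : F, (∀ i ≤ m, y + i ≠ 0) → ∏ i ∈ range (m + 1), (y + i) ≠ 0 :=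
      fun y hy => prod_ne_zero_iff.mpr fun i hi => hy i (by simp at hi; omega)
    have h₀ := hprod x (fun i hi => hx i (by omega))
    have h₁ := hprod (x + 1) hx₁
    have hlast := hx (m + 1) le_rfl
    have hQ : (∏ i ∈ range (m + 1), (x + 1 + i)) * x
        = (∏ i ∈ range (m + 1), (x + i)) * (x + (m + 1 : ℕ)) := by
      rw [← prod_range_succ (fun i : ℕ => x + i), prod_range_succ' (fun i : ℕ => x + i)]
      simp [add_assoc, add_comm (1 : F)]
    rw [prod_range_succ (fun i : ℕ => x + i) (m + 1)]
    field_simp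
    rw [factorial_succ]
    push_cast at hQ ⊢
    linear_combination (-1) ^ (m + 1) * (m ! : F) * hQ

section Mobius

variable {σ R : Type*} [CommRing R]

def mobiusSum (M : Finset σ) (g : Finset σ → R) : R :=
  ∑ U ∈ M.powerset, (-1) ^ (#M - #U) * g U

lemma mobiusSum_eq_zero_of_insert_eq [DecidableEq σ] {M : Finset σ} {g : Finset σ → R} {j : σ}
    (hj : j ∈ M) (hg : ∀ U, g (insert j U) = g U) : mobiusSum M g = 0 := by
  have hjM : j ∉ M.erase j := notMem_erase j M
  rw [mobiusSum, ← insert_erase hj, sum_powerset_insert hjM, ← sum_add_distrib]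
  refine sum_eq_zero fun U hU => ?_
  have hjU : j ∉ U := fun h => hjM (mem_powerset.mp hU h)
  have hUM : #U ≤ #(M.erase j) := card_le_card (mem_powerset.mp hU)
  rw [hg, card_insert_of_notMem hjM, card_insert_of_notMem hjU,
    show #(M.erase j) + 1 - #U = #(M.erase j) + 1 - (#U + 1) + 1 by omega, pow_succ]
  ring

lemma mobiusSum_card (M : Finset σ) (h : ℕ → R) :
    mobiusSum M (fun U => h #U) = Δ_[1] ^[#M] h 0 := by
  rw [mobiusSum, sum_powerset_apply_card (fun k => (-1) ^ (#M - k) * h k),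
    fwdDiff_iter_eq_sum_shift]
  refine sum_congr rfl fun k _ => ?_
  rw [zero_add, smul_eq_mul, mul_one, nsmul_eq_mul, zsmul_eq_mul]
  push_cast
  ring

lemma mobiusSum_card_inter_eq_zero [DecidableEq σ] {M T : Finset σ} (hMT : ¬M ⊆ T) (h : ℕ → R) :
    mobiusSum M (fun U => h #(U ∩ T)) = 0 := by
  obtain ⟨j, hjM, hjT⟩ := not_subset.mp hMT
  exact mobiusSum_eq_zero_of_insert_eq hjM fun U => by rw [insert_inter_of_notMem hjT]

lemma mobiusSum_card_inter_self [DecidableEq σ] (T : Finset σ) (h : ℕ → R) :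
    mobiusSum T (fun U => h #(U ∩ T)) = Δ_[1] ^[#T] h 0 := by
  rw [← mobiusSum_card, mobiusSum, mobiusSum]
  refine sum_congr rfl fun U hU => ?_
  rw [inter_eq_left.mpr (mem_powerset.mp hU)]

end Mobius

lemma linearIndependent_of_triangular {ι R V : Type*} [PartialOrder ι] [CommRing R]
    [NoZeroDivisors R] [AddCommGroup V] [Module R V] (v : ι → V) (l : ι → Module.Dual R V)
    (hle : ∀ i j, l i (v j) ≠ 0 → i ≤ j) (hdiag : ∀ i, l i (v i) ≠ 0) :
    LinearIndependent R v := by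
  rw [linearIndependent_iff']
  intro s g hsum i hi
  by_contra hgi
  obtain ⟨k, hk⟩ := exists_maximal (s := s.filter (g · ≠ 0)) ⟨i, mem_filter.mpr ⟨hi, hgi⟩⟩
  obtain ⟨hks, hgk⟩ := mem_filter.mp hk.prop
  have hlv : ∑ j ∈ s, g j * l k (v j) = g k * l k (v k) := by
    refine sum_eq_single k (fun j hjs hjk => ?_) (absurd hks)
    by_contra hne
    obtain ⟨hgj, hlj⟩ := mul_ne_zero_iff.mp hne
    have := hk.eq_of_le (mem_filter.mpr ⟨hjs, hgj⟩) (hle k j hlj)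
    exact hjk this.symm
  have := congrArg (l k) hsum
  simp only [map_sum, map_smul, smul_eq_mul, map_zero, hlv] at this
  exact mul_ne_zero hgk (hdiag k) this

section Cube

variable {σ R : Type*} [DecidableEq σ]

def cubePoint [Zero R] [One R] (U : Finset σ) : σ → R := fun i => if i ∈ U then 1 else 0

lemma cubePoint_eq_zero_or_one [Zero R] [One R] (U : Finset σ) (i : σ) :
    cubePoint (R := R) U i = 0 ∨ cubePoint (R := R) U i = 1 := by
  unfold cubePoint; split_ifs <;> simp

lemma sum_cubePoint_mul_cubePoint [Fintype σ] [NonAssocSemiring R] (U T : Finset σ) :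
    ∑ i, cubePoint U i * cubePoint T i = (#(U ∩ T) : R) := by
  simp [cubePoint, ← ite_and, ← mem_inter, inter_comm]

lemma comp_cubePoint {S : Type*} [NonAssocSemiring R] [NonAssocSemiring S] (e : R →+* S)
    (U : Finset σ) : e ∘ cubePoint U = cubePoint U := by
  funext i; simp [cubePoint, apply_ite e]

variable [CommRing R]

noncomputable def cubeMobius (M : Finset σ) : Module.Dual R (MvPolynomial σ R) :=
  ∑ U ∈ M.powerset, (-1 : R) ^ (#M - #U) • (aeval (cubePoint U)).toLinearMap

lemma cubeMobius_apply (M : Finset σ) (q : MvPolynomial σ R) :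
    cubeMobius M q = mobiusSum M (fun U => eval (cubePoint U) q) := by
  simp [cubeMobius, mobiusSum]

lemma eval_aeval_sumElim_cubePoint (f : MvPolynomial (σ ⊕ σ) R) (x : σ → R) (T : Finset σ) :
    eval x (aeval (Sum.elim X (cubePoint T)) f) = eval (Sum.elim x (cubePoint T)) f := by
  have := aeval_sumElim (S := R) (T := R) f (cubePoint T) x
  rw [Algebra.algebraMap_self, comp_cubePoint, comp_cubePoint] at this
  exact this.symm

end Cube

lemma eval_ml {F : Type*} [Field F] {n : ℕ} (q : MvPolynomial (Fin n) F) {x : Fin n → F}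
    (hx : ∀ i, x i = 0 ∨ x i = 1) : eval x (ml q) = eval x q := by
  rw [ml, map_sum, eval_eq' x q]
  refine sum_congr rfl fun d _ => ?_
  rw [eval_monomial, Finsupp.prod_fintype _ _ fun i => pow_zero _]
  congr 1
  refine prod_congr rfl fun i _ => ?_
  rcases hx i with h | h <;> simp [h, zero_pow_eq]

lemma eval_cubePoint_ml_aeval {F : Type*} [Field F] {n : ℕ} (β : F)
    (f : MvPolynomial (Fin n ⊕ Fin n) F)
    (hagree : ∀ x y : Fin n → F, (∀ i, x i = 0 ∨ x i = 1) → (∀ i, y i = 0 ∨ y i = 1) →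
      MvPolynomial.eval (Sum.elim x y) f = ((∑ i : Fin n, x i * y i) - β)⁻¹)
    (U T : Finset (Fin n)) :
    eval (cubePoint U) (ml (aeval (Sum.elim X (cubePoint T)) f)) = (-β + #(U ∩ T))⁻¹ := by
  rw [eval_ml _ (cubePoint_eq_zero_or_one U), eval_aeval_sumElim_cubePoint,
    hagree _ _ (cubePoint_eq_zero_or_one U) (cubePoint_eq_zero_or_one T),
    sum_cubePoint_mul_cubePoint, neg_add_eq_sub]

/-- Over a field of characteristic `0` or `> n` and `β ∉ {0,…,n}`: if `f(x,y)` agrees with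
`1/(∑ xᵢyᵢ − β)` on the boolean cube (with `Sum.inl` indexing the `x`-variables and
`Sum.inr` the `y`-variables), then the span of the multilinearizations of the `2ⁿ` partial
evaluations `f(x, 1_S)` for `S ⊆ [n]` has dimension at least `2ⁿ`. -/
theorem stmt17 {F : Type*} [Field F] (n : ℕ) (p : ℕ) [CharP F p] (hp : p = 0 ∨ n < p)
    (β : F) (hβ : ∀ k : ℕ, k ≤ n → β ≠ (k : F))
    (f : MvPolynomial (Fin n ⊕ Fin n) F)
    (hagree : ∀ x y : Fin n → F, (∀ i, x i = 0 ∨ x i = 1) → (∀ i, y i = 0 ∨ y i = 1) →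
      MvPolynomial.eval (Sum.elim x y) f = ((∑ i : Fin n, x i * y i) - β)⁻¹) :
    (2 ^ n : Cardinal) ≤
      Module.rank F (Submodule.span F {q : MvPolynomial (Fin n) F |
        ∃ S : Finset (Fin n),
          q = ml (MvPolynomial.aeval
            (Sum.elim (fun i : Fin n => (X i : MvPolynomial (Fin n) F))
              (fun j : Fin n => if j ∈ S then 1 else 0)) f)}) := by
  set v : Finset (Fin n) → MvPolynomial (Fin n) F :=
    fun T => ml (aeval (Sum.elim X (cubePoint T)) f)
  have hv : ∀ M T, cubeMobius M (v T) = mobiusSum M (fun U => (-β + #(U ∩ T))⁻¹) := by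
    intro M T
    simp only [cubeMobius_apply, v, eval_cubePoint_ml_aeval β f hagree]
  have hind : LinearIndependent F v := by
    refine linearIndependent_of_triangular v cubeMobius (fun M T h => ?_) fun T => ?_
    · by_contra hMT
      exact h (by rw [hv, mobiusSum_card_inter_eq_zero hMT fun k => (-β + k)⁻¹])
    · have hT : #T ≤ n := card_le_univ T |>.trans_eq (Fintype.card_fin n)
      have hβT : ∀ i ≤ #T, -β + i ≠ 0 := fun i hi h =>
        hβ i (hi.trans hT) (by linear_combination -h)
      rw [hv, mobiusSum_card_inter_self T fun k => (-β + k)⁻¹,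
        fwdDiff_iter_inv_add_natCast _ _ hβT]
      have := natCast_factorial_ne_zero_of_charP_s17 (R := F) p (hp.imp_right hT.trans_lt)
      simpa [this, prod_ne_zero_iff, Nat.lt_succ_iff] using hβT
  calc (2 ^ n : Cardinal) = Module.rank F (Submodule.span F (Set.range v)) := by
        rw [rank_span hind, Cardinal.mk_fintype, Set.card_range_of_injective hind.injective]
        simp
    _ ≤ _ := by
        refine Submodule.rank_mono (Submodule.span_mono ?_)
        exact Set.range_subset_iff.mpr fun S => ⟨S, rfl⟩
end
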